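/- arXiv:2112.10858 — 2 statements merged into one kernel-verified Lean document; each statement's English description precedes it below -/
import Mathlib

section
/- Let X and Y be independent random variables with Y ≥ 0 almost surely and P(Y > x) > 0 for all x. Suppose lim_{x→∞} P(X > x)/P(Y > x) = 0 and Y is regularly varying with tail index θ > 0. Then P(X + Y > u) ∼ P(Y > u) as u → ∞. -/
open MeasureTheory ProbabilityTheory Filter Set

/-- Tail probability `P(X > x)` as a real number. -/
noncomputable def tailP {Ω : Type*} [MeasurableSpace Ω] (μ : Measure Ω) (X : Ω → ℝ) (x : ℝ) : ℝ :=
  (μ {ω | x < X ω}).toReal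

/-- `L` is slowly varying: `L(αx)/L(x) → 1` as `x → ∞`, for every `α > 0`. -/
def SlowlyVarying (L : ℝ → ℝ) : Prop :=
  ∀ α : ℝ, 0 < α → Tendsto (fun x => L (α * x) / L x) atTop (nhds 1)

/-- `X` is regularly varying with tail index `θ`: `P(X > x) = x^{-θ} L(x)` with `L` slowly varying. -/
def RegVarying {Ω : Type*} [MeasurableSpace Ω] (μ : Measure Ω) (X : Ω → ℝ) (θ : ℝ) : Prop :=
  ∃ L : ℝ → ℝ, SlowlyVarying L ∧ ∀ x : ℝ, 0 < x → tailP μ X x = x ^ (-θ) * L x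

/-- Conditional probability `P(A | B)` as a real number. -/
noncomputable def condP {Ω : Type*} [MeasurableSpace Ω] (μ : Measure Ω) (A B : Set Ω) : ℝ :=
  (μ (A ∩ B)).toReal / (μ B).toReal

/-- Conditional expectation `E[g | B]` as a real number. -/
noncomputable def condE {Ω : Type*} [MeasurableSpace Ω] (μ : Measure Ω) (B : Set Ω) (g : Ω → ℝ) : ℝ :=
  (∫ ω in B, g ω ∂μ) / (μ B).toReal

/-- Cumulative distribution function of `X`. -/
noncomputable def cdfR {Ω : Type*} [MeasurableSpace Ω] (μ : Measure Ω) (X : Ω → ℝ) (t : ℝ) : ℝ :=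
  (μ {ω | X ω ≤ t}).toReal

open Topology

/-!
Compare `{X + Y > u}` with events at thresholds proportional to `u`. For `c < 1`,
`P(X + Y > u) ≤ P(X > (1 - c) u) + P(Y > c u)`, and the first term is `o(P(Y > u))` because
the negligibility of the tail of `X` survives rescaling the argument by a regularly varying
tail. For `c > 1`, independence gives `P(X + Y > u) ≥ P(X > (1 - c) u) P(Y > c u)`, where
`P(X > (1 - c) u) → 1`. Regular variation sends `P(Y > c u) / P(Y > u)` to `c ^ (-θ)`, which
tends to `1` as `c → 1`.
-/

theorem SlowlyVarying.eventually_ne_zero {L : ℝ → ℝ} (hL : SlowlyVarying L) :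
    ∀ᶠ x in atTop, L x ≠ 0 := by
  -- Where `L x = 0`, the ratio `L x / L x` takes the junk value `0`, so it cannot tend to `1`.
  filter_upwards [(hL 1 one_pos).eventually_ne one_ne_zero] with x hx
  simpa using hx

section

variable {Ω : Type*} [MeasurableSpace Ω]

theorem tailP_nonneg (μ : Measure Ω) (X : Ω → ℝ) (x : ℝ) : 0 ≤ tailP μ X x :=
  ENNReal.toReal_nonneg

variable {μ : Measure Ω}

theorem tendsto_tailP_atBot [IsProbabilityMeasure μ] (X : Ω → ℝ) :
    Tendsto (tailP μ X) atBot (𝓝 1) := by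
  have hanti : Antitone fun t : ℝ => {ω | t < X ω} :=
    fun s t hst ω hω => lt_of_le_of_lt hst hω
  have hunion : (⋃ t : ℝ, {ω | t < X ω}) = univ :=
    eq_univ_of_forall fun ω => mem_iUnion.2 ⟨X ω - 1, by simp⟩
  have h := tendsto_measure_iUnion_atBot (μ := μ) hanti
  rw [hunion, measure_univ] at h
  exact (ENNReal.tendsto_toReal ENNReal.one_ne_top).comp h

theorem tailP_add_le [IsFiniteMeasure μ] (X Y : Ω → ℝ) (a b : ℝ) :
    tailP μ (fun ω => X ω + Y ω) (a + b) ≤ tailP μ X a + tailP μ Y b := by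
  have hsub : {ω | a + b < X ω + Y ω} ⊆ {ω | a < X ω} ∪ {ω | b < Y ω} := by
    intro ω hω
    by_contra hc
    simp only [mem_union, mem_ofPred_eq, not_or, not_lt] at hω hc
    linarith
  exact (measureReal_mono hsub).trans (measureReal_union_le _ _)

theorem ProbabilityTheory.IndepFun.tailP_mul_le_tailP_add [IsFiniteMeasure μ] {X Y : Ω → ℝ}
    (hXY : IndepFun X Y μ) (a b : ℝ) :
    tailP μ X a * tailP μ Y b ≤ tailP μ (fun ω => X ω + Y ω) (a + b) := by
  have hsub : {ω | a < X ω} ∩ {ω | b < Y ω} ⊆ {ω | a + b < X ω + Y ω} :=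
    fun _ ⟨hX, hY⟩ => add_lt_add (α := ℝ) hX hY
  calc tailP μ X a * tailP μ Y b = μ.real ({ω | a < X ω} ∩ {ω | b < Y ω}) := by
        rw [tailP, tailP, measureReal_def, ← ENNReal.toReal_mul]
        exact congrArg _ (hXY.measure_inter_preimage_eq_mul _ _ measurableSet_Ioi
          measurableSet_Ioi).symm
    _ ≤ _ := measureReal_mono hsub

namespace RegVarying

variable {X Y : Ω → ℝ} {θ : ℝ}

theorem eventually_tailP_pos (hY : RegVarying μ Y θ) : ∀ᶠ x in atTop, 0 < tailP μ Y x := by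
  obtain ⟨L, hL, hrep⟩ := hY
  filter_upwards [hL.eventually_ne_zero, eventually_gt_atTop 0] with x hLx hx
  refine (tailP_nonneg μ Y x).lt_of_ne' ?_
  rw [hrep x hx]
  exact mul_ne_zero (Real.rpow_pos_of_pos hx _).ne' hLx

theorem tendsto_tailP_mul_div (hY : RegVarying μ Y θ) {α : ℝ} (hα : 0 < α) :
    Tendsto (fun u => tailP μ Y (α * u) / tailP μ Y u) atTop (𝓝 (α ^ (-θ))) := by
  obtain ⟨L, hL, hrep⟩ := hY
  have h := (hL α hα).const_mul (α ^ (-θ))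
  rw [mul_one] at h
  refine h.congr' ?_
  filter_upwards [eventually_gt_atTop 0] with u hu
  have hu' : u ^ (-θ) ≠ 0 := (Real.rpow_pos_of_pos hu _).ne'
  rw [hrep _ (mul_pos hα hu), hrep u hu, Real.mul_rpow hα.le hu.le]
  field_simp

theorem tendsto_comp_mul_div_tailP (hY : RegVarying μ Y θ) {f : ℝ → ℝ}
    (hf : Tendsto (fun x => f x / tailP μ Y x) atTop (𝓝 0)) {α : ℝ} (hα : 0 < α) :
    Tendsto (fun u => f (α * u) / tailP μ Y u) atTop (𝓝 0) := by
  have hαu : Tendsto (fun u => α * u) atTop atTop := tendsto_id.const_mul_atTop hα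
  have h := (hf.comp hαu).mul (hY.tendsto_tailP_mul_div hα)
  rw [zero_mul] at h
  refine h.congr' ?_
  filter_upwards [hαu.eventually hY.eventually_tailP_pos] with u hu
  exact div_mul_div_cancel₀ hu.ne'

theorem eventually_lt_tailP_add_div [IsProbabilityMeasure μ] (hY : RegVarying μ Y θ)
    (hXY : IndepFun X Y μ) {a : ℝ} (ha : a < 1) :
    ∀ᶠ u in atTop, a < tailP μ (fun ω => X ω + Y ω) u / tailP μ Y u := by
  have hc : ∀ᶠ c in 𝓝[>] (1 : ℝ), a < c ^ (-θ) := by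
    exact nhdsWithin_le_nhds ((Real.continuousAt_rpow_const 1 (-θ) (.inl one_ne_zero)).eventually
      (lt_mem_nhds (by simpa using ha)))
  obtain ⟨c, hac, hc1⟩ := (hc.and self_mem_nhdsWithin).exists
  have hX : Tendsto (fun u => tailP μ X ((1 - c) * u)) atTop (𝓝 1) :=
    (tendsto_tailP_atBot X).comp (tendsto_id.const_mul_atTop_of_neg (sub_neg.2 hc1))
  have hlower := hX.mul (hY.tendsto_tailP_mul_div (zero_lt_one.trans hc1))
  rw [one_mul] at hlower
  filter_upwards [hlower.eventually (lt_mem_nhds hac)] with u hu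
  calc a < tailP μ X ((1 - c) * u) * (tailP μ Y (c * u) / tailP μ Y u) := hu
    _ = tailP μ X ((1 - c) * u) * tailP μ Y (c * u) / tailP μ Y u := (mul_div_assoc ..).symm
    _ ≤ tailP μ (fun ω => X ω + Y ω) u / tailP μ Y u := by
      refine div_le_div_of_nonneg_right ?_ (tailP_nonneg μ Y u)
      simpa [← add_mul] using hXY.tailP_mul_le_tailP_add ((1 - c) * u) (c * u)

theorem eventually_tailP_add_div_lt [IsFiniteMeasure μ] (hY : RegVarying μ Y θ)
    (hX : Tendsto (fun x => tailP μ X x / tailP μ Y x) atTop (𝓝 0)) {b : ℝ} (hb : 1 < b) :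
    ∀ᶠ u in atTop, tailP μ (fun ω => X ω + Y ω) u / tailP μ Y u < b := by
  have hc : ∀ᶠ c in 𝓝[<] (1 : ℝ), c ^ (-θ) < b ∧ 0 < c := by
    exact nhdsWithin_le_nhds (((Real.continuousAt_rpow_const 1 (-θ)
      (.inl one_ne_zero)).eventually (gt_mem_nhds (by simpa using hb))).and
      (lt_mem_nhds one_pos))
  obtain ⟨c, ⟨hcb, hc0⟩, hc1⟩ := (hc.and self_mem_nhdsWithin).exists
  have hupper := (hY.tendsto_comp_mul_div_tailP hX (sub_pos.2 hc1)).add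
    (hY.tendsto_tailP_mul_div hc0)
  rw [zero_add] at hupper
  filter_upwards [hupper.eventually (gt_mem_nhds hcb)] with u hu
  calc tailP μ (fun ω => X ω + Y ω) u / tailP μ Y u
      ≤ (tailP μ X ((1 - c) * u) + tailP μ Y (c * u)) / tailP μ Y u := by
        refine div_le_div_of_nonneg_right ?_ (tailP_nonneg μ Y u)
        simpa [← add_mul] using tailP_add_le (μ := μ) X Y ((1 - c) * u) (c * u)
    _ = _ := add_div ..
    _ < b := hu

end RegVarying

end

theorem stmt_6_general {Ω : Type*} [MeasurableSpace Ω] (μ : Measure Ω) [IsProbabilityMeasure μ]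
    (X Y : Ω → ℝ)
    (hindep : IndepFun X Y μ)
    (hneg : Tendsto (fun x => tailP μ X x / tailP μ Y x) atTop (nhds 0))
    (θ : ℝ) (hYrv : RegVarying μ Y θ) :
    Tendsto (fun u => tailP μ (fun ω => X ω + Y ω) u / tailP μ Y u) atTop (nhds 1) :=
  tendsto_order.2 ⟨fun _ ha => hYrv.eventually_lt_tailP_add_div hindep ha,
    fun _ hb => hYrv.eventually_tailP_add_div_lt hneg hb⟩

/-- tail equivalence of sums when one summand has negligible tail:
if Y ≥ 0 a.s. is regularly varying and P(X > x)/P(Y > x) → 0, then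
P(X + Y > u) ∼ P(Y > u) as u → ∞. -/
theorem stmt_6 {Ω : Type*} [MeasurableSpace Ω] (μ : Measure Ω) [IsProbabilityMeasure μ]
    (X Y : Ω → ℝ) (hX : Measurable X) (hY : Measurable Y)
    (hindep : IndepFun X Y μ)
    (hYnonneg : ∀ᵐ ω ∂μ, 0 ≤ Y ω)
    (hYpos : ∀ x : ℝ, 0 < μ {ω | x < Y ω})
    (hneg : Tendsto (fun x => tailP μ X x / tailP μ Y x) atTop (nhds 0))
    (θ : ℝ) (hθ : 0 < θ) (hYrv : RegVarying μ Y θ) :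
    Tendsto (fun u => tailP μ (fun ω => X ω + Y ω) u / tailP μ Y u) atTop (nhds 1) :=
  stmt_6_general μ X Y hindep hneg θ hYrv
end

section
/- Let (X_t, Y_t) follow the NAAR model X_t = f₁(X_{t−1}) + f₂(Y_{t−q}) + ε_t^X, Y_t = g₁(Y_{t−1}) + g₂(X_{t−q}) + ε_t^Y, where g₁, g₂, ε_t^Y are non-negative, g₂ is continuous with g₂(x) → ∞ as x → ∞, and the marginals are continuous with support containing a neighborhood of infinity. Then for every λ ∈ ℝ, lim_{v→∞} P(Y_q > λ ∣ X_0 > v) = 1; consequently Γ^{time}_{X→Y}(q) = 1. -/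
/-!
Since `g₁` and `ε^Y` are non-negative, the recursion gives `Y_q ≥ g₂(X₀)` pointwise, and
`g₂(x) → ∞`. Hence for `v` large the event `{X₀ > v}` lies inside `{Y_q > λ}`, and the
conditional probability is eventually exactly `1`. For the tail coefficient, given `m` pick `M`
with `g₂ > m` on `[M, ∞)`; as `F_X(M) < 1` by the support assumption, `F_X(X₀) > u` with `u`
close to `1` forces `X₀ > M`, so `max_i F_Y(Y_i) ≥ F_Y(Y_q) ≥ F_Y(m)` on the conditioning
event, and `F_Y(m)` is as close to `1` as we like.
-/

open MeasureTheory ProbabilityTheory Filter Set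

open Topology

section Distribution

lemma monotone_cdfR {Ω : Type*} [MeasurableSpace Ω] (μ : Measure Ω) [IsFiniteMeasure μ]
    (X : Ω → ℝ) : Monotone (cdfR μ X) :=
  fun _ _ hst => ENNReal.toReal_mono (measure_ne_top μ _) (measure_mono fun _ hω => le_trans hω hst)

variable {Ω : Type*} [MeasurableSpace Ω] (μ : Measure Ω) [IsProbabilityMeasure μ] {X : Ω → ℝ}

lemma cdfR_eq_cdf_map (hX : Measurable X) : cdfR μ X = cdf (μ.map X) := by
  have := Measure.isProbabilityMeasure_map (μ := μ) hX.aemeasurable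
  funext t
  rw [cdf_eq_real, measureReal_def, Measure.map_apply hX measurableSet_Iic]
  rfl

lemma cdfR_le_one (t : ℝ) : cdfR μ X t ≤ 1 := by
  simpa [cdfR] using ENNReal.toReal_mono ENNReal.one_ne_top (prob_le_one (μ := μ))

lemma exists_lt_cdfR (hX : Measurable X) {c : ℝ} (hc : c < 1) : ∃ t, c < cdfR μ X t := by
  rw [cdfR_eq_cdf_map μ hX]
  exact ((tendsto_cdf_atTop _).eventually (lt_mem_nhds hc)).exists

lemma cdfR_add_tailP (hX : Measurable X) (t : ℝ) : cdfR μ X t + tailP μ X t = 1 := by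
  have hcompl : {ω | t < X ω} = {ω | X ω ≤ t}ᶜ := by ext; simp
  rw [cdfR, tailP, hcompl, ← measureReal_def, ← measureReal_def,
    measureReal_add_measureReal_compl (s := {ω | X ω ≤ t}) (hX measurableSet_Iic), probReal_univ]

lemma cdfR_lt_one (hX : Measurable X) {t : ℝ} (ht : μ {ω | t < X ω} ≠ 0) : cdfR μ X t < 1 := by
  have := cdfR_add_tailP μ hX t
  have : 0 < tailP μ X t := ENNReal.toReal_pos ht (measure_ne_top μ _)
  linarith

lemma setOf_lt_cdfR_subset {t u : ℝ} (hu : cdfR μ X t ≤ u) :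
    {ω | u < cdfR μ X (X ω)} ⊆ {ω | t < X ω} := fun ω hω => by
  by_contra hle
  exact (hu.trans_lt hω).not_ge (monotone_cdfR μ X (not_lt.mp hle))

lemma measure_lt_cdfR_ne_zero (hX : Measurable X) (hsupp : ∀ v, 0 < μ {ω | v < X ω}) {u : ℝ}
    (hu : u < 1) : μ {ω | u < cdfR μ X (X ω)} ≠ 0 := by
  obtain ⟨t, ht⟩ := exists_lt_cdfR μ hX hu
  refine ((hsupp t).trans_le (measure_mono fun ω hω => ?_)).ne'
  exact ht.trans_le (monotone_cdfR μ X (le_of_lt hω))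

lemma integrable_sup'_cdfR {ι : Type*} {s : Finset ι} (hs : s.Nonempty) {Z : ι → Ω → ℝ}
    (hZ : ∀ i, Measurable (Z i)) : Integrable (fun ω => s.sup' hs fun i => cdfR μ X (Z i ω)) μ := by
  have hmeas : Measurable fun ω => s.sup' hs fun i => cdfR μ X (Z i ω) := by
    convert Finset.measurable_sup' (f := fun i ω => cdfR μ X (Z i ω)) hs fun i _ =>
      (monotone_cdfR μ X).measurable.comp (hZ i) using 1
    ext ω
    rw [Finset.sup'_apply]
  refine .of_bound hmeas.aestronglyMeasurable 1 (ae_of_all _ fun ω => ?_)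
  obtain ⟨i, hi⟩ := hs
  rw [Real.norm_eq_abs, abs_le]
  exact ⟨(neg_one_lt_zero.le.trans ENNReal.toReal_nonneg).trans
      (Finset.le_sup' (fun i => cdfR μ X (Z i ω)) hi),
    Finset.sup'_le _ _ fun i _ => cdfR_le_one μ _⟩

end Distribution

section Conditioning

variable {Ω : Type*} [MeasurableSpace Ω] {μ : Measure Ω} [IsFiniteMeasure μ]

lemma condP_eq_one_of_subset {A B : Set Ω} (hBA : B ⊆ A) (hB : μ B ≠ 0) : condP μ A B = 1 := by
  rw [condP, inter_eq_self_of_subset_right hBA, div_self]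
  exact (ENNReal.toReal_pos hB (measure_ne_top μ B)).ne'

lemma condE_mem_Icc {B : Set Ω} {g : Ω → ℝ} {c d : ℝ} (hB : MeasurableSet B) (hB0 : μ B ≠ 0)
    (hg : IntegrableOn g B μ) (hcd : ∀ ω ∈ B, g ω ∈ Icc c d) : condE μ B g ∈ Icc c d := by
  have hpos : 0 < μ.real B := ENNReal.toReal_pos hB0 (measure_ne_top μ B)
  have hupper : ∫ ω in B, g ω ∂μ ≤ d * μ.real B := by
    simpa [mul_comm] using setIntegral_mono_on hg (integrableOn_const (measure_ne_top μ B)) hB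
      fun ω hω => (hcd ω hω).2
  have hlower : c * μ.real B ≤ ∫ ω in B, g ω ∂μ :=
    setIntegral_ge_of_const_le_real hB (measure_ne_top μ B) (fun ω hω => (hcd ω hω).1) hg
  rw [condE, ← measureReal_def]
  exact ⟨(le_div_iff₀ hpos).mpr hlower, (div_le_iff₀ hpos).mpr hupper⟩

lemma tendsto_condE_of_forall_lt {ι : Type*} {l : Filter ι} {B : ι → Set Ω} {g : Ω → ℝ} {a : ℝ}
    (hB : ∀ᶠ i in l, MeasurableSet (B i) ∧ μ (B i) ≠ 0) (hg : Integrable g μ)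
    (hle : ∀ ω, g ω ≤ a) (hlow : ∀ c < a, ∀ᶠ i in l, ∀ ω ∈ B i, c ≤ g ω) :
    Tendsto (fun i => condE μ (B i) g) l (𝓝 a) := by
  refine tendsto_order.2 ⟨fun c hc => ?_, fun d hd => ?_⟩
  · obtain ⟨c', hcc', hc'a⟩ := exists_between hc
    filter_upwards [hB, hlow c' hc'a] with i ⟨hBm, hB0⟩ hgi
    exact hcc'.trans_le
      (condE_mem_Icc hBm hB0 hg.integrableOn fun ω hω => ⟨hgi ω hω, hle ω⟩).1
  · filter_upwards [hB, hlow (a - 1) (by linarith)] with i ⟨hBm, hB0⟩ hgi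
    exact (condE_mem_Icc hBm hB0 hg.integrableOn fun ω hω => ⟨hgi ω hω, hle ω⟩).2.trans_lt hd

end Conditioning

theorem stmt_11_general {Ω : Type*} [MeasurableSpace Ω] (μ : Measure Ω) [IsProbabilityMeasure μ]
    (X Y : ℤ → Ω → ℝ) (εY : ℤ → Ω → ℝ) (q : ℕ)
    (hXmeas : ∀ t, Measurable (X t)) (hYmeas : ∀ t, Measurable (Y t))
    (g₁ g₂ : ℝ → ℝ)
    (heqY : ∀ t ω, Y t ω = g₁ (Y (t - 1) ω) + g₂ (X (t - (q : ℤ)) ω) + εY t ω)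
    (hg₁ : ∀ x, 0 ≤ g₁ x)
    (hεY : ∀ t ω, 0 ≤ εY t ω)
    (hg₂inf : Tendsto g₂ atTop atTop)
    (hXsupp : ∀ v : ℝ, 0 < μ {ω | v < X 0 ω}) :
    (∀ l : ℝ, Tendsto (fun v => condP μ {ω | l < Y (q : ℤ) ω} {ω | v < X 0 ω})
        atTop (nhds 1)) ∧
    Tendsto (fun u => condE μ {ω | u < cdfR μ (X 0) (X 0 ω)}
        (fun ω => Finset.sup' (Finset.range (q + 1)) Finset.nonempty_range_add_one
          (fun i => cdfR μ (Y 0) (Y (i : ℤ) ω))))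
      (nhdsWithin 1 (Set.Iio 1)) (nhds 1) := by
  have hkey : ∀ ω, g₂ (X 0 ω) ≤ Y q ω := fun ω => by
    have := heqY q ω
    rw [sub_self] at this
    linarith [hg₁ (Y (q - 1) ω), hεY q ω]
  have hlarge (l : ℝ) : ∃ M, ∀ ω, M < X 0 ω → l < Y q ω := by
    obtain ⟨M, hM⟩ := eventually_atTop.mp (hg₂inf.eventually (eventually_gt_atTop l))
    exact ⟨M, fun ω hω => (hM _ hω.le).trans_le (hkey ω)⟩
  refine ⟨fun l => ?_, ?_⟩
  · obtain ⟨M, hM⟩ := hlarge l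
    refine tendsto_const_nhds.congr' ?_
    filter_upwards [eventually_ge_atTop M] with v hv
    exact (condP_eq_one_of_subset (fun ω hω => hM ω (hv.trans_lt hω)) (hXsupp v).ne').symm
  refine tendsto_condE_of_forall_lt ?_ (integrable_sup'_cdfR μ _ fun i => hYmeas i)
    (fun ω => Finset.sup'_le _ _ fun i _ => cdfR_le_one μ _) ?_
  · filter_upwards [self_mem_nhdsWithin] with u hu
    exact ⟨(monotone_cdfR μ (X 0)).measurable.comp (hXmeas 0) measurableSet_Ioi,
      measure_lt_cdfR_ne_zero μ (hXmeas 0) hXsupp hu⟩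
  · intro c hc
    obtain ⟨m, hm⟩ := exists_lt_cdfR μ (hYmeas 0) hc
    obtain ⟨M, hM⟩ := hlarge m
    filter_upwards [Ioo_mem_nhdsLT (cdfR_lt_one μ (hXmeas 0) (hXsupp M).ne')] with u hu ω hω
    calc c ≤ cdfR μ (Y 0) m := hm.le
      _ ≤ cdfR μ (Y 0) (Y q ω) :=
        monotone_cdfR μ (Y 0) (hM ω (setOf_lt_cdfR_subset μ hu.1.le hω)).le
      _ ≤ _ := Finset.le_sup' (fun i : ℕ => cdfR μ (Y 0) (Y i ω)) (Finset.self_mem_range_succ q)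

/-- in the NAAR model with non-negative g₁, g₂, ε^Y and g₂ continuous tending
to ∞, extremes of the cause X₀ force extremes of the effect Y_q:
lim_{v→∞} P(Y_q > λ | X₀ > v) = 1 for every λ, hence Γ^{time}_{X→Y}(q) = 1. -/
theorem stmt_11 {Ω : Type*} [MeasurableSpace Ω] (μ : Measure Ω) [IsProbabilityMeasure μ]
    (X Y : ℤ → Ω → ℝ) (εX εY : ℤ → Ω → ℝ) (q : ℕ)
    (hXmeas : ∀ t, Measurable (X t)) (hYmeas : ∀ t, Measurable (Y t))
    (f₁ f₂ g₁ g₂ : ℝ → ℝ)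
    (heqX : ∀ t ω, X t ω = f₁ (X (t - 1) ω) + f₂ (Y (t - (q : ℤ)) ω) + εX t ω)
    (heqY : ∀ t ω, Y t ω = g₁ (Y (t - 1) ω) + g₂ (X (t - (q : ℤ)) ω) + εY t ω)
    (hg₁ : ∀ x, 0 ≤ g₁ x) (hg₂ : ∀ x, 0 ≤ g₂ x)
    (hεY : ∀ t ω, 0 ≤ εY t ω)
    (hg₂cont : Continuous g₂) (hg₂inf : Tendsto g₂ atTop atTop)
    (hXcont : ∀ c : ℝ, μ {ω | X 0 ω = c} = 0)
    (hYcont : ∀ c : ℝ, μ {ω | Y 0 ω = c} = 0)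
    (hXsupp : ∀ v : ℝ, 0 < μ {ω | v < X 0 ω})
    (hYsupp : ∀ v : ℝ, 0 < μ {ω | v < Y 0 ω})
    (hXstat : ∀ t, Measure.map (X t) μ = Measure.map (X 0) μ)
    (hYstat : ∀ t, Measure.map (Y t) μ = Measure.map (Y 0) μ) :
    (∀ l : ℝ, Tendsto (fun v => condP μ {ω | l < Y (q : ℤ) ω} {ω | v < X 0 ω})
        atTop (nhds 1)) ∧
    Tendsto (fun u => condE μ {ω | u < cdfR μ (X 0) (X 0 ω)}
        (fun ω => Finset.sup' (Finset.range (q + 1)) Finset.nonempty_range_add_one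
          (fun i => cdfR μ (Y 0) (Y (i : ℤ) ω))))
      (nhdsWithin 1 (Set.Iio 1)) (nhds 1) :=
  stmt_11_general μ X Y εY q hXmeas hYmeas g₁ g₂ heqY hg₁ hεY hg₂inf hXsupp
end
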